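/- arXiv:2507.09828 — 2 statements merged into one kernel-verified Lean document; each statement's English description precedes it below -/
import Mathlib

section
/- Define τ(c) = c·Φ(c) + φ(c). For every β > 0, τ(-√β) ≥ exp(-√(π/2)·√β)·φ(√β). -/
open Real MeasureTheory ProbabilityTheory Set

/-- Standard normal PDF. -/
noncomputable def stdPdf (c : ℝ) : ℝ := (Real.sqrt (2 * Real.pi))⁻¹ * Real.exp (-c ^ 2 / 2)

/-- Standard normal CDF. -/
noncomputable def stdCdf (c : ℝ) : ℝ := ∫ t in Set.Iic c, stdPdf t

/-- τ(c) = c·Φ(c) + φ(c). -/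
noncomputable def tau (c : ℝ) : ℝ := c * stdCdf c + stdPdf c

/-!
Writing `K c = ∫₀^∞ e^{-cs} e^{-s²/2} ds`, a shift of the integration variable gives
`Φ(-c) = φ(c) K c`, hence `τ(-c) = φ(c) (1 - c K c)`. The weight `e^{-s²/2}` takes values in
`[0, 1]` and has mass `√(π/2)` on `(0, ∞)`, so against the decreasing function `e^{-cs}` it
integrates to at most what the indicator of `(0, √(π/2)]` does (the bathtub principle). This gives
`c K c ≤ 1 - e^{-c√(π/2)}`.
-/

lemma integrable_exp_neg_sq_div_two : Integrable fun s : ℝ => exp (-s ^ 2 / 2) := by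
  simpa [neg_div, div_eq_inv_mul] using integrable_exp_neg_mul_sq (b := 1 / 2) (by norm_num)

lemma integral_Ioi_exp_neg_sq_div_two : ∫ s in Ioi 0, exp (-s ^ 2 / 2) = √(π / 2) := by
  have h := integral_gaussian_Ioi (1 / 2)
  simp only [show ∀ s : ℝ, -(1 / 2) * s ^ 2 = -s ^ 2 / 2 from fun s => by ring] at h
  rw [h, div_div_eq_mul_div, div_one, show π * 2 = 2 ^ 2 * (π / 2) by ring,
    sqrt_mul (by positivity), sqrt_sq zero_le_two]
  ring

lemma stdPdf_neg (c : ℝ) : stdPdf (-c) = stdPdf c := by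
  simp [stdPdf]

lemma stdPdf_add (c s : ℝ) : stdPdf (s + c) = stdPdf c * (exp (-(c * s)) * exp (-s ^ 2 / 2)) := by
  rw [stdPdf, stdPdf, mul_assoc, ← exp_add, ← exp_add]
  ring_nf

lemma stdCdf_neg (c : ℝ) :
    stdCdf (-c) = stdPdf c * ∫ s in Ioi 0, exp (-(c * s)) * exp (-s ^ 2 / 2) := by
  have hshift := (measurePreserving_add_right volume c).setIntegral_preimage_emb
    (measurableEmbedding_addRight c) stdPdf (Ioi c)
  rw [preimage_add_const_Ioi, sub_self] at hshift
  simp only [stdCdf, ← integral_comp_neg_Ioi, stdPdf_neg, ← hshift, stdPdf_add]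
  exact integral_const_mul _ _

theorem setIntegral_Ioi_mul_le_setIntegral_Ioc_of_antitoneOn {f g : ℝ → ℝ} {a : ℝ}
    (hf : AntitoneOn f (Ici 0)) (hg₀ : ∀ s, 0 ≤ g s) (hg₁ : ∀ s, g s ≤ 1)
    (hg : IntegrableOn g (Ioi 0)) (hga : ∫ s in Ioi 0, g s = a)
    (hfg : IntegrableOn (fun s => f s * g s) (Ioi 0)) (hfa : IntegrableOn f (Ioc 0 a)) :
    ∫ s in Ioi 0, f s * g s ≤ ∫ s in Ioc 0 a, f s := by
  have ha : 0 ≤ a := hga ▸ setIntegral_nonneg measurableSet_Ioi fun s _ => hg₀ s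
  have hIoc : Ioi 0 ∩ Ioc 0 a = Ioc 0 a := inter_eq_right.2 Ioc_subset_Ioi_self
  have hind : IntegrableOn ((Ioc 0 a).indicator f) (Ioi 0) :=
    (hfa.integrable_indicator measurableSet_Ioc).integrableOn
  have hone : IntegrableOn ((Ioc 0 a).indicator fun _ => (1 : ℝ)) (Ioi 0) :=
    ((integrableOn_const (by simp)).integrable_indicator measurableSet_Ioc).integrableOn
  -- Since `∫ g = a = ∫ 1_{(0,a]}`, subtracting `f a` times their difference changes nothing,
  -- and afterwards the integrand is pointwise nonnegative because `f` is antitone.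
  have hnonneg : 0 ≤ ∫ s in Ioi 0,
      ((Ioc 0 a).indicator f s - f s * g s) - f a * ((Ioc 0 a).indicator (fun _ => 1) s - g s) := by
    refine setIntegral_nonneg measurableSet_Ioi fun s (hs : 0 < s) => ?_
    by_cases hsa : s ≤ a
    · have : f a ≤ f s := hf hs.le ha hsa
      simp only [indicator_of_mem (show s ∈ Ioc 0 a from ⟨hs, hsa⟩)]
      nlinarith [hg₁ s]
    · have : f s ≤ f a := hf ha hs.le (le_of_not_ge hsa)
      simp only [indicator_of_notMem (show s ∉ Ioc 0 a from fun h => hsa h.2)]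
      nlinarith [hg₀ s]
  have h₁ : IntegrableOn (fun s => (Ioc 0 a).indicator f s - f s * g s) (Ioi 0) := hind.sub hfg
  have h₂ : IntegrableOn (fun s => (Ioc 0 a).indicator (fun _ => 1) s - g s) (Ioi 0) := hone.sub hg
  rw [integral_sub h₁ (h₂.const_mul _), integral_const_mul,
    integral_sub hind hfg, integral_sub hone hg, setIntegral_indicator measurableSet_Ioc,
    setIntegral_indicator measurableSet_Ioc, hIoc, hga, setIntegral_const] at hnonneg
  simpa only [volume_real_Ioc, sub_zero, ha, sup_of_le_left, smul_eq_mul, mul_one, sub_self,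
    mul_zero, sub_nonneg] using hnonneg

lemma integral_Ioc_exp_neg_mul {c a : ℝ} (hc : c ≠ 0) (ha : 0 ≤ a) :
    ∫ s in Ioc 0 a, exp (-(c * s)) = (1 - exp (-(c * a))) / c := by
  rw [← intervalIntegral.integral_of_le ha]
  simp only [intervalIntegral.integral_comp_mul_left (fun x => exp (-x)) hc, mul_zero,
    intervalIntegral.integral_comp_neg, neg_zero, integral_exp, exp_zero, smul_eq_mul]
  field_simp

lemma mul_integral_Ioi_exp_neg_mul_mul_gaussian_le {c : ℝ} (hc : 0 < c) :
    c * ∫ s in Ioi 0, exp (-(c * s)) * exp (-s ^ 2 / 2) ≤ 1 - exp (-(c * √(π / 2))) := by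
  have hanti : AntitoneOn (fun s => exp (-(c * s))) (Ici 0) := fun x _ y _ hxy =>
    exp_le_exp.2 (by nlinarith)
  have hint : IntegrableOn (fun s => exp (-(c * s)) * exp (-s ^ 2 / 2)) (Ioi 0) :=
    integrable_exp_neg_sq_div_two.integrableOn.bdd_mul (by fun_prop) <| by
      rw [ae_restrict_iff' measurableSet_Ioi]
      refine .of_forall fun s (hs : 0 < s) => ?_
      rw [norm_of_nonneg (exp_pos _).le, exp_le_one_iff]
      nlinarith
  have hbath := setIntegral_Ioi_mul_le_setIntegral_Ioc_of_antitoneOn hanti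
    (fun s => (exp_pos _).le) (fun s => exp_le_one_iff.2 (by nlinarith [sq_nonneg s]))
    integrable_exp_neg_sq_div_two.integrableOn integral_Ioi_exp_neg_sq_div_two hint
    (by fun_prop : Continuous fun s => exp (-(c * s))).integrableOn_Ioc
  rw [integral_Ioc_exp_neg_mul hc.ne' (sqrt_nonneg _)] at hbath
  calc c * _ ≤ c * ((1 - exp (-(c * √(π / 2)))) / c) := by gcongr
    _ = _ := by field_simp

lemma mul_stdCdf_neg_le {c : ℝ} (hc : 0 < c) :
    c * stdCdf (-c) ≤ (1 - exp (-√(π / 2) * c)) * stdPdf c := by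
  have hpdf : 0 < stdPdf c := by unfold stdPdf; positivity
  rw [stdCdf_neg, mul_left_comm, mul_comm (stdPdf c), neg_mul, mul_comm √_ c]
  exact mul_le_mul_of_nonneg_right (mul_integral_Ioi_exp_neg_mul_mul_gaussian_le hc) hpdf.le

theorem tau_neg_sqrt_lower_bound (β : ℝ) (hβ : 0 < β) :
    tau (-Real.sqrt β) ≥ Real.exp (-Real.sqrt (Real.pi / 2) * Real.sqrt β) * stdPdf (Real.sqrt β) := by
  have h := mul_stdCdf_neg_le (sqrt_pos.2 hβ)
  rw [tau, stdPdf_neg]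
  linarith
end

section
/- Suppose g, f are such that |f(x) − μ(x)| ≤ √β·σ(x) at two inputs x, x' and the EI acquisition with rescaled variance satisfies: for a ∈ ℝ with |a − μ(x)| ≤ √β·σ(x), b ∈ ℝ, and ν > 0, it holds that max{(a−b)₊ − √β·σ(x), (τ(−√β/√ν)/τ(√β/√ν))·(a−b)₊} ≤ ν^{1/2}·σ(x)·τ((μ(x)−b)/(ν^{1/2}σ(x))) ≤ (a−b)₊ + (√β + √ν)·σ(x), where (·)₊ = max{0,·} and τ(c) = cΦ(c) + φ(c). -/
open Real MeasureTheory ProbabilityTheory Set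

/-! Writing `τ(c) = ∫_{-∞}^c (c - t) φ(t) dt` shows that `τ` is nonnegative and nondecreasing, and
`Φ(c) + Φ(-c) = 1` gives `τ(c) - τ(-c) = c`; hence `c₊ ≤ τ(c) ≤ c₊ + τ(0) ≤ c₊ + 1`. After dividing
by `k = √ν σ`, the hypothesis says that `q = (a - b)/k` and `s = (μ - b)/k` differ by at most
`t = √β/√ν`, and all three bounds follow from these properties of `τ`, the ratio bound through the
estimate `τ(-t)/τ(t) · q ≤ τ(q - t)` for `q ≥ 0`. -/

lemma stdPdf_eq_gaussianPDFReal : stdPdf = gaussianPDFReal 0 1 := by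
  ext c
  simp [stdPdf, gaussianPDFReal]

lemma stdPdf_pos (c : ℝ) : 0 < stdPdf c := by
  rw [stdPdf_eq_gaussianPDFReal]; exact gaussianPDFReal_pos _ _ _ one_ne_zero

lemma stdPdf_zero_le_one : stdPdf 0 ≤ 1 := by
  have : 1 ≤ √(2 * π) := one_le_sqrt.2 (by linarith [pi_gt_three])
  simpa [stdPdf] using inv_le_one_of_one_le₀ this

lemma integrable_stdPdf : Integrable stdPdf := by
  rw [stdPdf_eq_gaussianPDFReal]; exact integrable_gaussianPDFReal _ _

lemma integral_stdPdf : ∫ t, stdPdf t = 1 := by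
  rw [stdPdf_eq_gaussianPDFReal]; exact integral_gaussianPDFReal_eq_one _ one_ne_zero

lemma integrable_mul_stdPdf : Integrable fun t => t * stdPdf t := by
  refine ((integrable_mul_exp_neg_mul_sq (b := 1 / 2) (by norm_num)).const_mul
    (√(2 * π))⁻¹).congr (.of_forall fun t => ?_)
  simp only [stdPdf]; ring_nf

lemma hasDerivAt_stdPdf (x : ℝ) : HasDerivAt stdPdf (-(x * stdPdf x)) x := by
  have h : HasDerivAt (fun t : ℝ => -t ^ 2 / 2) (-x) x :=
    ((hasDerivAt_pow 2 x).fun_neg.div_const 2).congr_deriv (by ring)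
  exact (h.exp.const_mul (√(2 * π))⁻¹).congr_deriv (by rw [stdPdf]; ring)

lemma setIntegral_Iic_mul_stdPdf (x : ℝ) : ∫ t in Iic x, t * stdPdf t = -stdPdf x := by
  have hderiv : ∀ t ∈ Iic x, HasDerivAt stdPdf (-(t * stdPdf t)) t :=
    fun t _ => hasDerivAt_stdPdf t
  have hint : IntegrableOn (fun t => -(t * stdPdf t)) (Iic x) :=
    integrable_mul_stdPdf.neg.integrableOn
  have h := integral_Iic_of_hasDerivAt_of_tendsto' hderiv hint
    (tendsto_zero_of_hasDerivAt_of_integrableOn_Iic hderiv hint integrable_stdPdf.integrableOn)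
  rw [integral_neg] at h
  linarith

lemma stdCdf_add_stdCdf_neg (c : ℝ) : stdCdf c + stdCdf (-c) = 1 := by
  have h1 : stdCdf (-c) = ∫ t in Ioi c, stdPdf t := by
    simpa [stdCdf, stdPdf_neg] using integral_comp_neg_Iic (-c) stdPdf
  rw [h1, ← integral_stdPdf]
  exact intervalIntegral.integral_Iic_add_Ioi integrable_stdPdf.integrableOn
    integrable_stdPdf.integrableOn

lemma integrable_sub_mul_stdPdf (c : ℝ) : Integrable fun t => (c - t) * stdPdf t := by
  simpa only [sub_mul] using
    ((integrable_stdPdf.const_mul c).sub integrable_mul_stdPdf :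
      Integrable fun t => c * stdPdf t - t * stdPdf t)

lemma tau_eq_setIntegral (c : ℝ) : tau c = ∫ t in Iic c, (c - t) * stdPdf t := by
  simp_rw [sub_mul]
  rw [integral_sub (integrable_stdPdf.const_mul c).integrableOn integrable_mul_stdPdf.integrableOn,
    integral_const_mul, setIntegral_Iic_mul_stdPdf, tau, stdCdf, sub_neg_eq_add]

lemma tau_nonneg (c : ℝ) : 0 ≤ tau c := by
  rw [tau_eq_setIntegral]
  exact setIntegral_nonneg measurableSet_Iic fun t ht =>
    mul_nonneg (sub_nonneg.2 ht) (stdPdf_pos t).le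

lemma tau_monotone : Monotone tau := fun c d hcd => by
  rw [tau_eq_setIntegral, tau_eq_setIntegral]
  calc ∫ t in Iic c, (c - t) * stdPdf t ≤ ∫ t in Iic c, (d - t) * stdPdf t :=
        setIntegral_mono (integrable_sub_mul_stdPdf c).integrableOn
          (integrable_sub_mul_stdPdf d).integrableOn fun t => by
            have := stdPdf_pos t
            gcongr
    _ ≤ ∫ t in Iic d, (d - t) * stdPdf t :=
        setIntegral_mono_set (integrable_sub_mul_stdPdf d).integrableOn
          ((ae_restrict_iff' measurableSet_Iic).2 (.of_forall fun t ht =>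
            mul_nonneg (sub_nonneg.2 ht) (stdPdf_pos t).le))
          (Iic_subset_Iic.2 hcd).eventuallyLE

lemma tau_sub_tau_neg (c : ℝ) : tau c - tau (-c) = c := by
  have h := stdCdf_add_stdCdf_neg c
  simp only [tau, stdPdf_neg]
  linear_combination c * h

lemma tau_zero : tau 0 = stdPdf 0 := by simp [tau]

lemma self_le_tau (c : ℝ) : c ≤ tau c := by
  linarith [tau_sub_tau_neg c, tau_nonneg (-c)]

lemma max_le_tau (c : ℝ) : max c 0 ≤ tau c := max_le (self_le_tau c) (tau_nonneg c)

lemma tau_le_max_add_one (c : ℝ) : tau c ≤ max c 0 + 1 := by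
  have h0 : tau 0 ≤ 1 := tau_zero ▸ stdPdf_zero_le_one
  rcases le_total c 0 with hc | hc
  · linarith [tau_monotone hc, le_max_right c 0]
  · linarith [tau_sub_tau_neg c, tau_monotone (neg_nonpos.2 hc), le_max_left c 0]

lemma tau_pos_of_nonneg {t : ℝ} (ht : 0 ≤ t) : 0 < tau t :=
  (tau_zero ▸ stdPdf_pos 0).trans_le (tau_monotone ht)

lemma tau_neg_div_tau_le_one {t : ℝ} (ht : 0 ≤ t) : tau (-t) / tau t ≤ 1 :=
  div_le_one_of_le₀ (tau_monotone (by linarith)) (tau_pos_of_nonneg ht).le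

/-- The line `q ↦ (τ(-t)/τ(t)) q` meets the asymptote `q ↦ q - t` of `q ↦ τ(q - t)` at `q = τ(t)`,
since `τ(-t) = τ(t) - t`: before that point it stays below `τ(-t)`, after it below `q - t`. -/
lemma tau_neg_div_tau_mul_le {t q : ℝ} (ht : 0 ≤ t) (hq : 0 ≤ q) :
    tau (-t) / tau t * q ≤ tau (q - t) := by
  have hpos := tau_pos_of_nonneg ht
  rcases le_total q (tau t) with hqt | hqt
  · calc tau (-t) / tau t * q ≤ tau (-t) / tau t * tau t :=
          mul_le_mul_of_nonneg_left hqt (div_nonneg (tau_nonneg _) hpos.le)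
      _ = tau (-t) := div_mul_cancel₀ _ hpos.ne'
      _ ≤ tau (q - t) := tau_monotone (by linarith)
  · have h : t ≤ t / tau t * q := by
      rw [div_mul_eq_mul_div, le_div_iff₀ hpos]
      exact mul_le_mul_of_nonneg_left hqt ht
    calc tau (-t) / tau t * q = q - t / tau t * q := by
          rw [show tau (-t) = tau t - t by linarith [tau_sub_tau_neg t]]; field_simp
      _ ≤ q - t := by linarith
      _ ≤ tau (q - t) := self_le_tau _

lemma tau_sandwich {q s t : ℝ} (ht : 0 ≤ t) (hqs : |q - s| ≤ t) :
    max (max q 0 - t) (tau (-t) / tau t * max q 0) ≤ tau s ∧ tau s ≤ max q 0 + t + 1 := by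
  obtain ⟨hlo, hhi⟩ := abs_le.1 hqs
  refine ⟨max_le ?_ ?_, ?_⟩
  · calc max q 0 - t ≤ max s 0 := by
          rw [sub_le_iff_le_add]
          exact max_le (by linarith [le_max_left s 0]) (by linarith [le_max_right s 0])
      _ ≤ tau s := max_le_tau s
  · rcases le_total q 0 with hq | hq
    · rw [max_eq_right hq, mul_zero]
      exact tau_nonneg s
    · rw [max_eq_left hq]
      exact (tau_neg_div_tau_mul_le ht hq).trans (tau_monotone (by linarith))
  · calc tau s ≤ max s 0 + 1 := tau_le_max_add_one s
      _ ≤ max q 0 + t + 1 := by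
          gcongr
          exact max_le (by linarith [le_max_left q 0]) (by linarith [le_max_right q 0])

lemma mul_tau_div_sandwich {k t x y : ℝ} (hk : 0 < k) (ht : 0 ≤ t) (hxy : |x - y| ≤ k * t) :
    max (max x 0 - k * t) (tau (-t) / tau t * max x 0) ≤ k * tau (y / k) ∧
      k * tau (y / k) ≤ max x 0 + k * t + k := by
  have hscale : k * max (x / k) 0 = max x 0 := by
    rw [mul_max_of_nonneg _ _ hk.le, mul_div_cancel₀ _ hk.ne', mul_zero]
  have hqs : |x / k - y / k| ≤ t := by
    rwa [← sub_div, abs_div, abs_of_pos hk, div_le_iff₀ hk, mul_comm]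
  obtain ⟨hlow, hup⟩ := tau_sandwich ht hqs
  constructor
  · calc max (max x 0 - k * t) (tau (-t) / tau t * max x 0)
        = k * max (max (x / k) 0 - t) (tau (-t) / tau t * max (x / k) 0) := by
          rw [mul_max_of_nonneg _ _ hk.le, mul_sub, hscale, mul_left_comm, hscale]
      _ ≤ k * tau (y / k) := mul_le_mul_of_nonneg_left hlow hk.le
  · calc k * tau (y / k) ≤ k * (max (x / k) 0 + t + 1) := mul_le_mul_of_nonneg_left hup hk.le
      _ = max x 0 + k * t + k := by rw [mul_add, mul_add, hscale, mul_one]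

theorem rescaled_ei_sandwich_general (μ a b σ ν β : ℝ)
    (hσ : 0 ≤ σ) (hν : 0 < ν)
    (hconf : |a - μ| ≤ Real.sqrt β * σ) :
    max (max (a - b) 0 - Real.sqrt β * σ)
        ((tau (-Real.sqrt β / Real.sqrt ν) / tau (Real.sqrt β / Real.sqrt ν)) * max (a - b) 0) ≤
      (if σ = 0 then max (μ - b) 0
        else Real.sqrt ν * σ * tau ((μ - b) / (Real.sqrt ν * σ))) ∧
    (if σ = 0 then max (μ - b) 0
        else Real.sqrt ν * σ * tau ((μ - b) / (Real.sqrt ν * σ))) ≤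
      max (a - b) 0 + (Real.sqrt β + Real.sqrt ν) * σ := by
  rw [neg_div]
  have ht : 0 ≤ √β / √ν := by positivity
  rcases hσ.eq_or_lt with rfl | hσ
  · obtain rfl : a = μ := by simpa [sub_eq_zero] using hconf
    simp only [if_true, mul_zero, sub_zero, add_zero]
    exact ⟨max_le le_rfl (mul_le_of_le_one_left (le_max_right _ _) (tau_neg_div_tau_le_one ht)),
      le_rfl⟩
  · have htk : √ν * σ * (√β / √ν) = √β * σ := by field_simp
    obtain ⟨hlow, hup⟩ := mul_tau_div_sandwich (k := √ν * σ) (x := a - b) (y := μ - b)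
      (by positivity) ht (by rwa [sub_sub_sub_cancel_right, htk])
    rw [htk] at hlow hup
    rw [if_neg hσ.ne']
    exact ⟨hlow, hup.trans_eq (by ring)⟩

theorem rescaled_ei_sandwich (μ a b σ ν β : ℝ)
    (hσ : 0 ≤ σ) (hν : 0 < ν) (hβ : 0 < β)
    (hconf : |a - μ| ≤ Real.sqrt β * σ) :
    max (max (a - b) 0 - Real.sqrt β * σ)
        ((tau (-Real.sqrt β / Real.sqrt ν) / tau (Real.sqrt β / Real.sqrt ν)) * max (a - b) 0) ≤
      (if σ = 0 then max (μ - b) 0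
        else Real.sqrt ν * σ * tau ((μ - b) / (Real.sqrt ν * σ))) ∧
    (if σ = 0 then max (μ - b) 0
        else Real.sqrt ν * σ * tau ((μ - b) / (Real.sqrt ν * σ))) ≤
      max (a - b) 0 + (Real.sqrt β + Real.sqrt ν) * σ :=
  rescaled_ei_sandwich_general μ a b σ ν β hσ hν hconf
end
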